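/- arXiv:2402.14662 — 11 statements merged into one kernel-verified Lean document; each statement's English description precedes it below -/
import Mathlib

section
/- Let L be a first-order language with no relation symbols. Let A, B, C be quantitative L-algebras, let e : A → B be a surjective nonexpanding homomorphism, and let g : A → C be a nonexpanding homomorphism such that edist (g x) (g x') ≤ edist (e x) (e x') for all x, x' ∈ A. Then there exists a unique nonexpanding homomorphism h : B → C with g = h ∘ e. (This is the universal property showing that surjective homomorphisms of quantitative algebras are subregular epimorphisms.) -/
open FirstOrder FirstOrder.Language

/-- A quantitative `L`-algebra: all operations are nonexpanding for the sup metric. -/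
def QuantAlg (L : Language) (A : Type*) [EMetricSpace A] [L.Structure A] : Prop :=
  ∀ (n : ℕ) (σ : L.Functions n) (x y : Fin n → A),
    edist (Structure.funMap σ x) (Structure.funMap σ y) ≤ ⨆ i, edist (x i) (y i)

/-- A homomorphism of quantitative `L`-algebras: a nonexpanding map preserving all
operations. -/
def IsQHom (L : Language) (A B : Type*) [EMetricSpace A] [L.Structure A]
    [EMetricSpace B] [L.Structure B] (f : A → B) : Prop :=
  (∀ x y : A, edist (f x) (f y) ≤ edist x y) ∧
  ∀ (n : ℕ) (σ : L.Functions n) (x : Fin n → A),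
    f (Structure.funMap σ x) = Structure.funMap σ (f ∘ x)

/-- Surjective homomorphisms of quantitative algebras have the universal property of
subregular epimorphisms. -/
theorem surjective_qhom_universal (L : Language) (hL : ∀ n, IsEmpty (L.Relations n))
    {A B C : Type*} [EMetricSpace A] [L.Structure A] [EMetricSpace B] [L.Structure B]
    [EMetricSpace C] [L.Structure C]
    (hA : QuantAlg L A) (hB : QuantAlg L B) (hC : QuantAlg L C)
    (e : A → B) (he : IsQHom L A B e) (hesurj : Function.Surjective e)
    (g : A → C) (hg : IsQHom L A C g)
    (hdist : ∀ x x' : A, edist (g x) (g x') ≤ edist (e x) (e x')) :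
    ∃! h : B → C, IsQHom L B C h ∧ g = h ∘ e := by
  classical
  have key : ∀ a a' : A, e a = e a' → g a = g a' := by
    intro a a' h
    have := hdist a a'
    rw [h, edist_self] at this
    exact edist_le_zero.mp this
  set h : B → C := g ∘ Function.surjInv hesurj with hh
  have hfac : ∀ a : A, h (e a) = g a := fun a =>
    key _ _ (Function.surjInv_eq hesurj (e a))
  refine ⟨h, ⟨⟨?_, ?_⟩, ?_⟩, ?_⟩
  · intro b b'
    obtain ⟨a, rfl⟩ := hesurj b
    obtain ⟨a', rfl⟩ := hesurj b'
    rw [hfac, hfac]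
    exact hdist a a'
  · intro n σ x
    have hx : ∀ i, e (Function.surjInv hesurj (x i)) = x i :=
      fun i => Function.surjInv_eq hesurj (x i)
    have : Structure.funMap σ x = e (Structure.funMap σ (fun i => Function.surjInv hesurj (x i))) := by
      rw [he.2]
      congr 1
      funext i
      exact (hx i).symm
    rw [this, hfac, hg.2]
    rfl
  · funext a
    exact (hfac a).symm
  · rintro h' ⟨hh'1, rfl⟩
    funext b
    obtain ⟨a, rfl⟩ := hesurj b
    exact (hfac (a)).symm
end

section
/- Let R be a subcongruence on an extended metric space X with induced distance d̂. Then d̂ is an extended pseudometric on X: d̂(x,x) = 0 for all x, d̂(x,y) = d̂(y,x) for all x, y, and d̂(x,z) ≤ d̂(x,y) + d̂(y,z) for all x, y, z. Moreover d̂(x,y) ≤ edist x y for all x, y (the identity map from (X, edist) to (X, d̂) is nonexpanding). -/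
open scoped NNReal ENNReal

/-- A subcongruence on an extended metric space `X`: a family of relations `rel ε ⊆ X × X`
indexed by nonnegative reals `ε`, which is monotone, `ε`-reflexive, symmetric, transitive
and continuous. -/
structure Subcong (X : Type*) [EMetricSpace X] where
  rel : ℝ≥0 → Set (X × X)
  mono : ∀ ⦃ε ε' : ℝ≥0⦄, ε ≤ ε' → rel ε ⊆ rel ε'
  isRefl : ∀ (ε : ℝ≥0) (x y : X), edist x y ≤ (ε : ℝ≥0∞) → (x, y) ∈ rel ε
  isSymm : ∀ (ε : ℝ≥0) (x y : X), (x, y) ∈ rel ε → (y, x) ∈ rel ε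
  isTrans : ∀ (ε ε' : ℝ≥0) (x y z : X),
    (x, y) ∈ rel ε → (y, z) ∈ rel ε' → (x, z) ∈ rel (ε + ε')
  cont : ∀ ε : ℝ≥0, rel ε = ⋂ n : ℕ, rel (ε + 1 / (n + 1))

/-- The distance induced by a subcongruence: the infimum of all `ε` with `(x, y) ∈ rel ε`
(`∞` if there is no such `ε`). -/
noncomputable def Subcong.dist {X : Type*} [EMetricSpace X] (R : Subcong X)
    (x y : X) : ℝ≥0∞ :=
  ⨅ (ε : ℝ≥0) (_ : (x, y) ∈ R.rel ε), (ε : ℝ≥0∞)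


/-- The distance induced by a subcongruence is an extended pseudometric below `edist`. -/
theorem subcong_dist_pseudometric {X : Type*} [EMetricSpace X] (R : Subcong X) :
    (∀ x : X, R.dist x x = 0) ∧
    (∀ x y : X, R.dist x y = R.dist y x) ∧
    (∀ x y z : X, R.dist x z ≤ R.dist x y + R.dist y z) ∧
    (∀ x y : X, R.dist x y ≤ edist x y) := by
  have hle : ∀ x y : X, R.dist x y ≤ edist x y := by
    intro x y
    rcases eq_or_ne (edist x y) ∞ with h | h
    · simp [h]
    · have hmem : (x, y) ∈ R.rel (edist x y).toNNReal :=
        R.isRefl _ x y (by rw [ENNReal.coe_toNNReal h])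
      calc R.dist x y ≤ ((edist x y).toNNReal : ℝ≥0∞) := iInf₂_le ((edist x y).toNNReal) hmem
        _ = edist x y := ENNReal.coe_toNNReal h
  refine ⟨fun x => le_antisymm (by simpa using hle x x) bot_le, ?_, ?_, hle⟩
  · intro x y
    apply le_antisymm <;>
    · refine le_iInf₂ fun ε hmem => iInf₂_le ε (R.isSymm ε _ _ hmem)
  · intro x y z
    rw [Subcong.dist, Subcong.dist, ENNReal.iInf_add]
    refine le_iInf fun ε => ?_
    rw [ENNReal.iInf_add]
    refine le_iInf fun hxy => ?_
    rw [Subcong.dist, ENNReal.add_iInf]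
    refine le_iInf fun ε' => ?_
    rw [ENNReal.add_iInf]
    refine le_iInf fun hyz => ?_
    calc (⨅ (δ : ℝ≥0) (_ : (x, z) ∈ R.rel δ), (δ : ℝ≥0∞)) ≤ ((ε + ε' : ℝ≥0) : ℝ≥0∞) :=
          iInf₂_le (ε + ε') (R.isTrans ε ε' x y z hxy hyz)
      _ = (ε : ℝ≥0∞) + ε' := by simp
end

section
/- The category of extended metric spaces has effective subcongruences: if R is a subcongruence on an extended metric space X with induced distance d̂, then for every real ε ≥ 0 and all x, y ∈ X one has (x,y) ∈ R ε if and only if d̂(x,y) ≤ ε. Hence R is exactly the family of ε-kernel relations of the metric-reflection quotient map of the pseudometric d̂. -/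
open scoped NNReal ENNReal

/-- Effectivity of subcongruences in `Met`: a subcongruence consists exactly of the
`ε`-kernel relations of (the metric reflection of) its induced distance. -/
theorem subcong_effective {X : Type*} [EMetricSpace X] (R : Subcong X) (ε : ℝ≥0)
    (x y : X) : (x, y) ∈ R.rel ε ↔ R.dist x y ≤ (ε : ℝ≥0∞) := by
  constructor
  · intro h
    exact iInf₂_le_of_le ε h le_rfl
  · intro h
    rw [R.cont ε]
    refine Set.mem_iInter.2 fun n => ?_
    have hpos : (0 : ℝ≥0) < 1 / (n + 1) := by positivity
    have hlt : R.dist x y < ((ε + 1 / (n + 1) : ℝ≥0) : ℝ≥0∞) := by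
      refine lt_of_le_of_lt h ?_
      exact_mod_cast lt_add_of_pos_right ε hpos
    rw [Subcong.dist, iInf_lt_iff] at hlt
    obtain ⟨ε', hlt⟩ := hlt
    rw [iInf_lt_iff] at hlt
    obtain ⟨hmem, hlt⟩ := hlt
    exact R.mono (le_of_lt (by exact_mod_cast hlt)) hmem
end

section
/- Colimits of subcongruences commute with finite products in extended metric spaces: let R¹ be a subcongruence on an extended metric space X₁ with induced distance d̂₁, and R² a subcongruence on X₂ with induced distance d̂₂. Define R ε := { ((x₁,x₂),(y₁,y₂)) ∈ (X₁ × X₂)² : (x₁,y₁) ∈ R¹ ε and (x₂,y₂) ∈ R² ε }. Then R is a subcongruence on the product X₁ × X₂ (equipped with the max metric edist (x₁,x₂) (y₁,y₂) = max (edist x₁ y₁) (edist x₂ y₂)), and its induced distance satisfies d̂((x₁,x₂),(y₁,y₂)) = max (d̂₁(x₁,y₁)) (d̂₂(x₂,y₂)) for all points. -/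
open scoped NNReal ENNReal

/-- Colimits of subcongruences commute with finite products in `Met`: the componentwise
family of relations on the product (with the max metric) is a subcongruence whose induced
distance is the max of the induced distances. -/
theorem subcong_prod {X₁ X₂ : Type*} [EMetricSpace X₁] [EMetricSpace X₂]
    (R₁ : Subcong X₁) (R₂ : Subcong X₂) :
    (∀ p q : X₁ × X₂, edist p q = max (edist p.1 q.1) (edist p.2 q.2)) ∧
    ∃ R : Subcong (X₁ × X₂),
      (∀ ε : ℝ≥0, R.rel ε = {p : (X₁ × X₂) × (X₁ × X₂) |
        (p.1.1, p.2.1) ∈ R₁.rel ε ∧ (p.1.2, p.2.2) ∈ R₂.rel ε}) ∧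
      ∀ x y : X₁ × X₂, R.dist x y = max (R₁.dist x.1 y.1) (R₂.dist x.2 y.2) := by
  refine ⟨fun p q => Prod.edist_eq p q, ?_⟩
  refine ⟨{ rel := fun ε => {p : (X₁ × X₂) × (X₁ × X₂) |
        (p.1.1, p.2.1) ∈ R₁.rel ε ∧ (p.1.2, p.2.2) ∈ R₂.rel ε}
            mono := fun ε ε' h p hp => ⟨R₁.mono h hp.1, R₂.mono h hp.2⟩
            isRefl := by
              intro ε x y h
              rw [Prod.edist_eq] at h
              exact ⟨R₁.isRefl ε _ _ (le_trans (le_max_left _ _) h),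
                     R₂.isRefl ε _ _ (le_trans (le_max_right _ _) h)⟩
            isSymm := fun ε x y h => ⟨R₁.isSymm ε _ _ h.1, R₂.isSymm ε _ _ h.2⟩
            isTrans := fun ε ε' x y z h h' =>
              ⟨R₁.isTrans ε ε' _ _ _ h.1 h'.1, R₂.isTrans ε ε' _ _ _ h.2 h'.2⟩
            cont := by
              intro ε
              ext p
              simp only [Set.mem_setOf_eq, Set.mem_iInter]
              rw [R₁.cont ε, R₂.cont ε]
              simp only [Set.mem_iInter]
              constructor
              · rintro ⟨h1, h2⟩ n; exact ⟨h1 n, h2 n⟩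
              · intro h; exact ⟨fun n => (h n).1, fun n => (h n).2⟩ },
        fun ε => rfl, ?_⟩
  intro x y
  apply le_antisymm
  · refine le_of_forall_gt_imp_ge_of_dense fun c hc => ?_
    have h1 : R₁.dist x.1 y.1 < c := lt_of_le_of_lt (le_max_left _ _) hc
    have h2 : R₂.dist x.2 y.2 < c := lt_of_le_of_lt (le_max_right _ _) hc
    simp only [Subcong.dist, iInf_lt_iff] at h1 h2
    obtain ⟨ε₁, hm1, hε₁⟩ := h1
    obtain ⟨ε₂, hm2, hε₂⟩ := h2
    have hmem : ((x.1, y.1) ∈ R₁.rel (ε₁ ⊔ ε₂)) ∧ ((x.2, y.2) ∈ R₂.rel (ε₁ ⊔ ε₂)) :=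
      ⟨R₁.mono le_sup_left hm1, R₂.mono le_sup_right hm2⟩
    calc _ ≤ ((ε₁ ⊔ ε₂ : ℝ≥0) : ℝ≥0∞) := iInf₂_le (ε₁ ⊔ ε₂) hmem
    _ ≤ c := by
        rw [ENNReal.coe_max]
        exact sup_le hε₁.le hε₂.le
  · refine max_le ?_ ?_
    · exact le_iInf₂ fun ε hε => iInf₂_le ε hε.1
    · exact le_iInf₂ fun ε hε => iInf₂_le ε hε.2
end

section
/- Let L be a first-order language with no relation symbols, A a quantitative L-algebra, M any type (of variables), and f₁, f₂ : M → A any functions. Then the supremum distance of the induced evaluations of terms equals the supremum distance of the given assignments: ⨆_{t : L.Term M} edist (t.realize f₁) (t.realize f₂) = ⨆_{m : M} edist (f₁ m) (f₂ m). In particular, for every term t : L.Term M one has edist (t.realize f₁) (t.realize f₂) ≤ ⨆_{m : M} edist (f₁ m) (f₂ m). (This says the homomorphic extensions of f₁, f₂ to the free quantitative algebra of terms have the same distance as f₁, f₂.) -/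
open FirstOrder FirstOrder.Language

/-- The homomorphic extensions of two variable assignments to the free quantitative
algebra of terms have the same distance as the assignments themselves. -/
theorem term_realize_edist (L : Language) (hL : ∀ n, IsEmpty (L.Relations n))
    {A : Type*} [EMetricSpace A] [L.Structure A] (hA : QuantAlg L A)
    {M : Type*} (f₁ f₂ : M → A) :
    ((⨆ t : L.Term M, edist (t.realize f₁) (t.realize f₂)) =
      ⨆ m : M, edist (f₁ m) (f₂ m)) ∧
    ∀ t : L.Term M,
      edist (t.realize f₁) (t.realize f₂) ≤ ⨆ m : M, edist (f₁ m) (f₂ m) := by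
  have key : ∀ t : L.Term M,
      edist (t.realize f₁) (t.realize f₂) ≤ ⨆ m : M, edist (f₁ m) (f₂ m) := by
    intro t
    induction t with
    | var m => exact le_iSup (fun m => edist (f₁ m) (f₂ m)) m
    | func σ ts ih =>
      simp only [Term.realize]
      refine (hA _ σ _ _).trans (iSup_le fun i => ih i)
  refine ⟨le_antisymm (iSup_le key) (iSup_le fun m => ?_), key⟩
  exact le_iSup (fun t : L.Term M => edist (t.realize f₁) (t.realize f₂)) (Term.var m)
end

section
/- The category of quantitative L-algebras has coequalizers: given nonexpanding homomorphisms f₁, f₂ : A → B of quantitative L-algebras, there exist a quantitative L-algebra C and a surjective nonexpanding homomorphism q : B → C with q ∘ f₁ = q ∘ f₂ such that for every quantitative L-algebra W and every nonexpanding homomorphism h : B → W with h ∘ f₁ = h ∘ f₂ there is a unique nonexpanding homomorphism k : C → W with h = k ∘ q. -/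
open FirstOrder FirstOrder.Language

/-- A bundled extended metric space with an `L`-structure. -/
structure MetAlg (L : Language) where
  carrier : Type u
  [emet : EMetricSpace carrier]
  [str : L.Structure carrier]

attribute [instance] MetAlg.emet MetAlg.str


/-!
Call a pseudo-emetric on `B` admissible if it lies below `edist`, vanishes on every pair
`(f₁ a, f₂ a)` and makes all operations nonexpanding. The pointwise supremum of all admissible
pseudo-emetrics is again admissible, and the coequalizer is the metric quotient of `B` for this
largest one. A homomorphism `h` into a quantitative algebra with `h ∘ f₁ = h ∘ f₂` makes
`fun x y => edist (h x) (h y)` admissible, hence below the largest one, and this is exactly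
what makes `h` descend, nonexpandingly, to the quotient.
-/

open scoped ENNReal
open Structure

section SeparationQuotient

def FunMapNonexpanding (L : Language) (X : Type*) [PseudoEMetricSpace X] [L.Structure X] :
    Prop :=
  ∀ (n : ℕ) (σ : L.Functions n) (x y : Fin n → X),
    edist (funMap σ x) (funMap σ y) ≤ ⨆ i, edist (x i) (y i)

variable {L : Language} {X : Type*} [PseudoEMetricSpace X] [L.Structure X]

theorem FunMapNonexpanding.inseparable_funMap (hX : FunMapNonexpanding L X) {n : ℕ}
    (σ : L.Functions n) {x y : Fin n → X} (h : ∀ i, Inseparable (x i) (y i)) :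
    Inseparable (funMap σ x) (funMap σ y) := by
  simp only [EMetric.inseparable_iff] at h ⊢
  exact le_zero_iff.1 ((hX n σ x y).trans (iSup_le fun i => (h i).le))

variable (hL : ∀ n, IsEmpty (L.Relations n)) (hX : FunMapNonexpanding L X)

@[reducible]
def FunMapNonexpanding.prestructure : L.Prestructure (inseparableSetoid X) :=
  ⟨inferInstance, fun _ _ h => hX.inseparable_funMap _ h, fun {n} r => (hL n).elim r⟩

@[reducible]
noncomputable def FunMapNonexpanding.separationQuotientStructure :
    L.Structure (SeparationQuotient X) :=
  @quotientStructure L X (inseparableSetoid X) (hX.prestructure hL)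

theorem FunMapNonexpanding.funMap_mk {n : ℕ} (σ : L.Functions n) (x : Fin n → X) :
    @funMap L _ (hX.separationQuotientStructure hL) n σ (SeparationQuotient.mk ∘ x) =
      SeparationQuotient.mk (funMap σ x) :=
  @funMap_quotient_mk' L X (inseparableSetoid X) (hX.prestructure hL) n σ x

theorem FunMapNonexpanding.quantAlg_separationQuotient :
    @QuantAlg L (SeparationQuotient X) _ (hX.separationQuotientStructure hL) := by
  intro n σ x y
  obtain ⟨x, rfl⟩ := SeparationQuotient.surjective_mk.comp_left x
  obtain ⟨y, rfl⟩ := SeparationQuotient.surjective_mk.comp_left y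
  simpa only [hX.funMap_mk hL, SeparationQuotient.edist_mk, Function.comp_apply]
    using hX n σ x y

end SeparationQuotient

namespace QuantAlg

variable (L : Language) {A B : Type*} [EMetricSpace B] [L.Structure B] (f₁ f₂ : A → B)

structure IsAdmissible (e : B → B → ℝ≥0∞) : Prop where
  comm : ∀ x y, e x y = e y x
  triangle : ∀ x y z, e x z ≤ e x y + e y z
  le_edist : ∀ x y, e x y ≤ edist x y
  coeq : ∀ a, e (f₁ a) (f₂ a) = 0
  funMap_le : ∀ (n : ℕ) (σ : L.Functions n) (x y : Fin n → B),
    e (funMap σ x) (funMap σ y) ≤ ⨆ i, e (x i) (y i)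

noncomputable def coeqEDist (x y : B) : ℝ≥0∞ :=
  ⨆ e : {e : B → B → ℝ≥0∞ // IsAdmissible L f₁ f₂ e}, e.1 x y

variable {L f₁ f₂}

theorem IsAdmissible.self_eq_zero {e : B → B → ℝ≥0∞} (he : IsAdmissible L f₁ f₂ e) (x : B) :
    e x x = 0 :=
  le_zero_iff.1 ((he.le_edist x x).trans_eq (edist_self x))

theorem IsAdmissible.le_coeqEDist {e : B → B → ℝ≥0∞} (he : IsAdmissible L f₁ f₂ e) (x y : B) :
    e x y ≤ coeqEDist L f₁ f₂ x y :=
  le_iSup (fun e : {e : B → B → ℝ≥0∞ // IsAdmissible L f₁ f₂ e} => e.1 x y) ⟨e, he⟩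

variable (L f₁ f₂) in
theorem isAdmissible_coeqEDist : IsAdmissible L f₁ f₂ (coeqEDist L f₁ f₂) where
  comm x y := iSup_congr fun e => e.2.comm x y
  triangle x y z := iSup_le fun e => (e.2.triangle x y z).trans
    (add_le_add (e.2.le_coeqEDist x y) (e.2.le_coeqEDist y z))
  le_edist x y := iSup_le fun e => e.2.le_edist x y
  coeq a := ENNReal.iSup_eq_zero.2 fun e => e.2.coeq a
  funMap_le n σ x y := iSup_le fun e => (e.2.funMap_le n σ x y).trans
    (iSup_mono fun i => e.2.le_coeqEDist (x i) (y i))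

theorem isAdmissible_edist_comp {W : Type*} [EMetricSpace W] [L.Structure W]
    (hW : QuantAlg L W) {h : B → W} (hh : IsQHom L B W h) (hco : h ∘ f₁ = h ∘ f₂) :
    IsAdmissible L f₁ f₂ (fun x y => edist (h x) (h y)) where
  comm _ _ := edist_comm _ _
  triangle _ _ _ := edist_triangle _ _ _
  le_edist := hh.1
  coeq a := edist_eq_zero.2 (congrFun hco a)
  funMap_le n σ x y := by simpa only [hh.2, Function.comp_apply] using hW n σ (h ∘ x) (h ∘ y)

variable (L f₁ f₂)

def CoeqSpace (_L : Language) (_f₁ _f₂ : A → B) : Type _ := B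

def CoeqSpace.of : B → CoeqSpace L f₁ f₂ := id

-- Without `(B := B)`, `B` would be unified with the synonym, whose metric is being defined here.
noncomputable instance : PseudoEMetricSpace (CoeqSpace L f₁ f₂) where
  edist := coeqEDist (B := B) L f₁ f₂
  edist_self := (isAdmissible_coeqEDist L f₁ f₂).self_eq_zero
  edist_comm := (isAdmissible_coeqEDist L f₁ f₂).comm
  edist_triangle := (isAdmissible_coeqEDist L f₁ f₂).triangle

instance : L.Structure (CoeqSpace L f₁ f₂) := inferInstanceAs (L.Structure B)

theorem CoeqSpace.funMapNonexpanding : FunMapNonexpanding L (CoeqSpace L f₁ f₂) :=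
  (isAdmissible_coeqEDist L f₁ f₂).funMap_le

noncomputable def coequalizer (hL : ∀ n, IsEmpty (L.Relations n)) : MetAlg L :=
  @MetAlg.mk L (SeparationQuotient (CoeqSpace L f₁ f₂)) _
    ((CoeqSpace.funMapNonexpanding L f₁ f₂).separationQuotientStructure hL)

variable (hL : ∀ n, IsEmpty (L.Relations n))

namespace coequalizer

noncomputable def π : B → (coequalizer L f₁ f₂ hL).carrier :=
  SeparationQuotient.mk ∘ CoeqSpace.of L f₁ f₂

theorem edist_π (x y : B) : edist (π L f₁ f₂ hL x) (π L f₁ f₂ hL y) = coeqEDist L f₁ f₂ x y :=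
  SeparationQuotient.edist_mk _ _

theorem funMap_π {n : ℕ} (σ : L.Functions n) (x : Fin n → B) :
    funMap σ (π L f₁ f₂ hL ∘ x) = π L f₁ f₂ hL (funMap σ x) :=
  (CoeqSpace.funMapNonexpanding L f₁ f₂).funMap_mk hL σ (CoeqSpace.of L f₁ f₂ ∘ x)

theorem surjective_π : Function.Surjective (π L f₁ f₂ hL) :=
  SeparationQuotient.surjective_mk (X := CoeqSpace L f₁ f₂)

theorem quantAlg : QuantAlg L (coequalizer L f₁ f₂ hL).carrier :=
  (CoeqSpace.funMapNonexpanding L f₁ f₂).quantAlg_separationQuotient hL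

theorem isQHom_π : IsQHom L B (coequalizer L f₁ f₂ hL).carrier (π L f₁ f₂ hL) :=
  ⟨fun x y => (edist_π L f₁ f₂ hL x y).trans_le ((isAdmissible_coeqEDist L f₁ f₂).le_edist x y),
    fun _ σ x => (funMap_π L f₁ f₂ hL σ x).symm⟩

theorem π_comp_eq : π L f₁ f₂ hL ∘ f₁ = π L f₁ f₂ hL ∘ f₂ :=
  funext fun a => SeparationQuotient.mk_eq_mk.2 <|
    EMetric.inseparable_iff.2 ((isAdmissible_coeqEDist L f₁ f₂).coeq a)

theorem existsUnique_desc {W : Type*} [EMetricSpace W] [L.Structure W]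
    (hW : QuantAlg L W) {h : B → W} (hh : IsQHom L B W h) (hco : h ∘ f₁ = h ∘ f₂) :
    ∃! k : (coequalizer L f₁ f₂ hL).carrier → W, IsQHom L _ W k ∧ h = k ∘ π L f₁ f₂ hL := by
  have hadm := hW.isAdmissible_edist_comp hh hco
  let k : (coequalizer L f₁ f₂ hL).carrier → W :=
    SeparationQuotient.lift (X := CoeqSpace L f₁ f₂) h fun x y hxy =>
      edist_le_zero.1 ((hadm.le_coeqEDist x y).trans (EMetric.inseparable_iff.1 hxy).le)
  have hk : h = k ∘ π L f₁ f₂ hL := rfl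
  refine ⟨k, ⟨⟨fun x y => ?_, fun n σ x => ?_⟩, hk⟩, fun k' hk' =>
    (surjective_π L f₁ f₂ hL).injective_comp_right (hk'.2.symm.trans hk)⟩
  · obtain ⟨x, rfl⟩ := surjective_π L f₁ f₂ hL x
    obtain ⟨y, rfl⟩ := surjective_π L f₁ f₂ hL y
    rw [edist_π]
    exact hadm.le_coeqEDist x y
  · obtain ⟨x, rfl⟩ := (surjective_π L f₁ f₂ hL).comp_left x
    rw [funMap_π, ← Function.comp_apply (f := k), ← hk, hh.2, hk]
    rfl

end coequalizer

end QuantAlg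

theorem qalg_coequalizers_general (L : Language) (hL : ∀ n, IsEmpty (L.Relations n))
    {A B : Type u} [EMetricSpace B] [L.Structure B]
    (f₁ f₂ : A → B) :
    ∃ (C : MetAlg.{u} L) (q : B → C.carrier),
      QuantAlg L C.carrier ∧ IsQHom L B C.carrier q ∧ Function.Surjective q ∧
      q ∘ f₁ = q ∘ f₂ ∧
      ∀ (W : Type*) [EMetricSpace W] [L.Structure W], QuantAlg L W →
        ∀ h : B → W, IsQHom L B W h → h ∘ f₁ = h ∘ f₂ →
          ∃! k : C.carrier → W, IsQHom L C.carrier W k ∧ h = k ∘ q :=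
  ⟨QuantAlg.coequalizer L f₁ f₂ hL, QuantAlg.coequalizer.π L f₁ f₂ hL,
    QuantAlg.coequalizer.quantAlg L f₁ f₂ hL, QuantAlg.coequalizer.isQHom_π L f₁ f₂ hL,
    QuantAlg.coequalizer.surjective_π L f₁ f₂ hL, QuantAlg.coequalizer.π_comp_eq L f₁ f₂ hL,
    fun _ _ _ hW _ hh hco => QuantAlg.coequalizer.existsUnique_desc L f₁ f₂ hL hW hh hco⟩

/-- The category of quantitative `L`-algebras has coequalizers. -/
theorem qalg_coequalizers (L : Language) (hL : ∀ n, IsEmpty (L.Relations n))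
    {A B : Type u} [EMetricSpace A] [L.Structure A] [EMetricSpace B] [L.Structure B]
    (hA : QuantAlg L A) (hB : QuantAlg L B)
    (f₁ f₂ : A → B) (hf₁ : IsQHom L A B f₁) (hf₂ : IsQHom L A B f₂) :
    ∃ (C : MetAlg.{u} L) (q : B → C.carrier),
      QuantAlg L C.carrier ∧ IsQHom L B C.carrier q ∧ Function.Surjective q ∧
      q ∘ f₁ = q ∘ f₂ ∧
      ∀ (W : Type*) [EMetricSpace W] [L.Structure W], QuantAlg L W →
        ∀ h : B → W, IsQHom L B W h → h ∘ f₁ = h ∘ f₂ →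
          ∃! k : C.carrier → W, IsQHom L C.carrier W k ∧ h = k ∘ q :=
  qalg_coequalizers_general L hL f₁ f₂
end

section
/- The category of quantitative L-algebras has effective subcongruences: let A be a quantitative L-algebra and let R be a subcongruence on the underlying extended metric space of A such that each R ε is closed under the operations of A × A, i.e. for every n, every σ : L.Functions n and all x, y : Fin n → A, if (x i, y i) ∈ R ε for all i then (funMap σ x, funMap σ y) ∈ R ε. Then there exist a quantitative L-algebra C and a surjective nonexpanding homomorphism f : A → C such that for every real ε ≥ 0 and all x, y ∈ A: (x,y) ∈ R ε if and only if edist (f x) (f y) ≤ ε. -/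
open FirstOrder FirstOrder.Language
open scoped NNReal ENNReal

/-!
Put `d(x, y) = inf {ε | (x, y) ∈ R ε}`. By continuity of `R` the infimum is attained, so
`R ε = {d ≤ ε}`; reflexivity, symmetry and transitivity of `R` make `d` a pseudo-emetric below
`edist`, and compatibility of `R` with the operations makes them nonexpanding for `d`. The
algebra `C` is the metric identification (separation quotient) of `(A, d)`, on which the
operations descend because the relation `d = 0` is a congruence.
-/

universe u

theorem ENNReal.le_of_forall_ge_coe {a b : ℝ≥0∞} (h : ∀ ε : ℝ≥0, b ≤ ε → a ≤ ε) : a ≤ b := by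
  induction b using ENNReal.recTopCoe with
  | top => exact le_top
  | coe b => exact h b le_rfl

noncomputable section

namespace Subcong

variable {X : Type u} [EMetricSpace X] (R : Subcong X)

def rdist (x y : X) : ℝ≥0∞ := ⨅ (ε : ℝ≥0) (_ : (x, y) ∈ R.rel ε), (ε : ℝ≥0∞)

variable {R}

theorem rdist_le_of_mem {ε : ℝ≥0} {x y : X} (h : (x, y) ∈ R.rel ε) : R.rdist x y ≤ ε :=
  iInf₂_le ε h

theorem rdist_le_iff {ε : ℝ≥0} {x y : X} : R.rdist x y ≤ ε ↔ (x, y) ∈ R.rel ε := by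
  refine ⟨fun h => ?_, rdist_le_of_mem⟩
  rw [R.cont ε, Set.mem_iInter]
  intro n
  have hlt : R.rdist x y < ((ε + 1 / (n + 1) : ℝ≥0) : ℝ≥0∞) :=
    h.trans_lt (by exact_mod_cast lt_add_of_pos_right ε (by positivity))
  obtain ⟨ε', hε'⟩ := iInf_lt_iff.1 hlt
  obtain ⟨hmem, hε'⟩ := iInf_lt_iff.1 hε'
  exact R.mono (by exact_mod_cast hε'.le) hmem

variable (R)

theorem rdist_self (x : X) : R.rdist x x = 0 := by
  simpa using rdist_le_of_mem (R.isRefl 0 x x (by simp))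

theorem rdist_comm (x y : X) : R.rdist x y = R.rdist y x := by
  have key : ∀ a b : X, R.rdist a b ≤ R.rdist b a := fun a b =>
    le_iInf₂ fun ε h => rdist_le_of_mem (R.isSymm ε b a h)
  exact le_antisymm (key x y) (key y x)

theorem rdist_triangle (x y z : X) : R.rdist x z ≤ R.rdist x y + R.rdist y z := by
  simp only [rdist, ENNReal.iInf_add, ENNReal.add_iInf]
  exact le_iInf₂ fun ε₂ h₂ => le_iInf₂ fun ε₁ h₁ => by
    exact_mod_cast rdist_le_of_mem (R.isTrans ε₁ ε₂ x y z h₁ h₂)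

theorem rdist_le_edist (x y : X) : R.rdist x y ≤ edist x y :=
  ENNReal.le_of_forall_ge_coe fun ε h => rdist_le_of_mem (R.isRefl ε x y h)

/-- The points of `X` carrying the pseudo-emetric `R.rdist` instead of `edist`. -/
def Space (_R : Subcong X) : Type u := X

instance : PseudoEMetricSpace R.Space where
  edist := R.rdist
  edist_self := R.rdist_self
  edist_comm := R.rdist_comm
  edist_triangle := R.rdist_triangle

def Compatible (L : Language) [L.Structure X] : Prop :=
  ∀ (ε : ℝ≥0) (n : ℕ) (σ : L.Functions n) (x y : Fin n → X),
    (∀ i, (x i, y i) ∈ R.rel ε) → (Structure.funMap σ x, Structure.funMap σ y) ∈ R.rel ε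

variable {R} {L : Language} [L.Structure X]

theorem Compatible.rdist_funMap_le (hR : R.Compatible L) {n : ℕ} (σ : L.Functions n)
    (x y : Fin n → X) :
    R.rdist (Structure.funMap σ x) (Structure.funMap σ y) ≤ ⨆ i, R.rdist (x i) (y i) :=
  ENNReal.le_of_forall_ge_coe fun ε h =>
    rdist_le_iff.2 <| hR ε n σ x y fun i => rdist_le_iff.1 ((le_iSup _ i).trans h)

variable (hL : ∀ n, IsEmpty (L.Relations n)) (hR : R.Compatible L)

abbrev prestructure : L.Prestructure (inseparableSetoid R.Space) where
  toStructure := ‹L.Structure X›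
  fun_equiv {_ σ} x y hxy := by
    refine EMetric.inseparable_iff.2 (le_antisymm ?_ zero_le)
    refine (hR.rdist_funMap_le σ x y).trans (iSup_le fun i => ?_)
    exact (EMetric.inseparable_iff.1 (hxy i)).le
  rel_equiv {n} r := (hL n).elim r

def quotient : MetAlg.{u} L :=
  @MetAlg.mk L (SeparationQuotient R.Space) _ (@quotientStructure _ _ _ (prestructure hL hR))

def quotientMk : X → (quotient hL hR).carrier := SeparationQuotient.mk (X := R.Space)

theorem edist_quotientMk (x y : X) :
    edist (quotientMk hL hR x) (quotientMk hL hR y) = R.rdist x y :=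
  SeparationQuotient.edist_mk (X := R.Space) x y

theorem edist_quotientMk_le_iff {ε : ℝ≥0} {x y : X} :
    edist (quotientMk hL hR x) (quotientMk hL hR y) ≤ ε ↔ (x, y) ∈ R.rel ε := by
  rw [edist_quotientMk, rdist_le_iff]

theorem quotientMk_surjective : Function.Surjective (quotientMk hL hR) :=
  SeparationQuotient.surjective_mk (X := R.Space)

theorem quotientMk_funMap {n : ℕ} (σ : L.Functions n) (x : Fin n → X) :
    quotientMk hL hR (Structure.funMap σ x) = Structure.funMap σ (quotientMk hL hR ∘ x) :=
  (@funMap_quotient_mk' _ _ _ (prestructure hL hR) _ σ x).symm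

theorem isQHom_quotientMk : IsQHom L X (quotient hL hR).carrier (quotientMk hL hR) :=
  ⟨fun x y => (edist_quotientMk hL hR x y).trans_le (R.rdist_le_edist x y),
    fun _ σ x => quotientMk_funMap hL hR σ x⟩

theorem quantAlg_quotient : QuantAlg L (quotient hL hR).carrier := by
  intro n σ x y
  obtain ⟨x, rfl⟩ := (quotientMk_surjective hL hR).comp_left x
  obtain ⟨y, rfl⟩ := (quotientMk_surjective hL hR).comp_left y
  simp only [← quotientMk_funMap, Function.comp_apply, edist_quotientMk]
  exact hR.rdist_funMap_le σ x y

end Subcong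

theorem qalg_effective_subcong_general (L : Language) (hL : ∀ n, IsEmpty (L.Relations n))
    {A : Type u} [EMetricSpace A] [L.Structure A]
    (R : Subcong A)
    (hR : ∀ (ε : ℝ≥0) (n : ℕ) (σ : L.Functions n) (x y : Fin n → A),
      (∀ i, (x i, y i) ∈ R.rel ε) →
        (Structure.funMap σ x, Structure.funMap σ y) ∈ R.rel ε) :
    ∃ (C : MetAlg.{u} L) (f : A → C.carrier),
      QuantAlg L C.carrier ∧ IsQHom L A C.carrier f ∧ Function.Surjective f ∧
      ∀ (ε : ℝ≥0) (x y : A), (x, y) ∈ R.rel ε ↔ edist (f x) (f y) ≤ (ε : ℝ≥0∞) :=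
  ⟨Subcong.quotient hL hR, Subcong.quotientMk hL hR, Subcong.quantAlg_quotient hL hR,
    Subcong.isQHom_quotientMk hL hR, Subcong.quotientMk_surjective hL hR,
    fun _ _ _ => (Subcong.edist_quotientMk_le_iff hL hR).symm⟩

/-- The category of quantitative `L`-algebras has effective subcongruences: a
subcongruence closed under the operations is the family of `ε`-kernel relations of a
surjective homomorphism. -/
theorem qalg_effective_subcong (L : Language) (hL : ∀ n, IsEmpty (L.Relations n))
    {A : Type u} [EMetricSpace A] [L.Structure A] (hA : QuantAlg L A)
    (R : Subcong A)
    (hR : ∀ (ε : ℝ≥0) (n : ℕ) (σ : L.Functions n) (x y : Fin n → A),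
      (∀ i, (x i, y i) ∈ R.rel ε) →
        (Structure.funMap σ x, Structure.funMap σ y) ∈ R.rel ε) :
    ∃ (C : MetAlg.{u} L) (f : A → C.carrier),
      QuantAlg L C.carrier ∧ IsQHom L A C.carrier f ∧ Function.Surjective f ∧
      ∀ (ε : ℝ≥0) (x y : A), (x, y) ∈ R.rel ε ↔ edist (f x) (f y) ≤ (ε : ℝ≥0∞) :=
  qalg_effective_subcong_general L hL R hR
end
end

section
/- Every extended metric space with finitely many finite-distance components is abstractly finite in Met: let G be an extended metric space for which there is a finite subset T ⊆ G such that every x ∈ G has some t ∈ T with edist x t ≠ ∞. Let M be any type and let f : G → M × G be a map that is nonexpanding into the M-fold copower of G, i.e. for all x, y ∈ G: if (f x).1 = (f y).1 then edist (f x).2 (f y).2 ≤ edist x y, and if (f x).1 ≠ (f y).1 then edist x y = ∞. Then the set of indices { (f x).1 : x ∈ G } ⊆ M is finite; that is, f factors through a finite subcopower. -/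
open scoped ENNReal

/-- Every extended metric space with finitely many finite-distance components is
abstractly finite in `Met`: every nonexpanding map into a copower factors through a
finite subcopower. -/
theorem abstractly_finite_of_finitely_many_components {G : Type*} [EMetricSpace G]
    (T : Finset G) (hT : ∀ x : G, ∃ t ∈ T, edist x t ≠ ∞)
    {M : Type*} (f : G → M × G)
    (h₁ : ∀ x y : G, (f x).1 = (f y).1 → edist (f x).2 (f y).2 ≤ edist x y)
    (h₂ : ∀ x y : G, (f x).1 ≠ (f y).1 → edist x y = ∞) :
    (Set.range fun x : G => (f x).1).Finite := by
  apply Set.Finite.subset (T.finite_toSet.image fun t => (f t).1)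
  rintro m ⟨x, rfl⟩
  obtain ⟨t, ht, hd⟩ := hT x
  exact ⟨t, ht, by by_contra h; exact hd (h₂ x t (fun he => h he.symm))⟩
end

section
/- The free metric monoid on an extended metric space X is the list monoid with the addition metric: let M be a monoid carrying an extended metric such that multiplication is nonexpanding for the addition metric, i.e. edist (a*b) (a'*b') ≤ edist a a' + edist b b' for all a, a', b, b' ∈ M, and let g : X → M be a nonexpanding map. Then the unique monoid homomorphism List X → M extending g, given by l ↦ ((l.map g).prod), is nonexpanding for the addition metric on lists: for all l, l' : List X, edist ((l.map g).prod) ((l'.map g).prod) ≤ D l l'. -/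
open scoped ENNReal

/-- The addition metric on lists over an extended metric space: the sum of the pointwise
distances when the lengths agree, and `∞` otherwise. -/
noncomputable def listD {X : Type*} [EMetricSpace X] (l l' : List X) : ℝ≥0∞ :=
  if h : l.length = l'.length then
    ∑ i : Fin l.length, edist (l.get i) (l'.get (Fin.cast h i))
  else ∞

lemma listD_cons {X : Type*} [EMetricSpace X] (a b : X) (l l' : List X) :
    listD (a :: l) (b :: l') = edist a b + listD l l' := by
  by_cases h : l.length = l'.length
  · have h' : (a :: l).length = (b :: l').length := by simp [h]
    simp only [listD, dif_pos h, dif_pos h']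
    simp only [List.length_cons]
    rw [Fin.sum_univ_succ]
    rfl
  · have h' : ¬ (a :: l).length = (b :: l').length := by simp [h]
    simp [listD, dif_neg h, dif_neg h']

/-- The unique monoid homomorphism from the list monoid (with the addition metric) to a
metric monoid `M` (whose multiplication is nonexpanding for the addition metric)
extending a nonexpanding map `g` is nonexpanding. -/
theorem free_metric_monoid_extension_nonexpanding {X M : Type*} [EMetricSpace X]
    [EMetricSpace M] [Monoid M]
    (hmul : ∀ a a' b b' : M, edist (a * b) (a' * b') ≤ edist a a' + edist b b')
    (g : X → M) (hg : ∀ x x' : X, edist (g x) (g x') ≤ edist x x') :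
    ∀ l l' : List X, edist ((l.map g).prod) ((l'.map g).prod) ≤ listD l l' := by
  intro l
  induction l with
  | nil =>
    intro l'
    cases l' with
    | nil => simp [listD]
    | cons b l' =>
      have : ¬ ([] : List X).length = (b :: l').length := by simp
      simp [listD, this]
  | cons a l ih =>
    intro l'
    cases l' with
    | nil =>
      have : ¬ (a :: l).length = ([] : List X).length := by simp
      simp [listD, this]
    | cons b l' =>
      rw [listD_cons]
      simp only [List.map_cons, List.prod_cons]
      calc edist (g a * (l.map g).prod) (g b * (l'.map g).prod)
          ≤ edist (g a) (g b) + edist ((l.map g).prod) ((l'.map g).prod) := hmul _ _ _ _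
        _ ≤ edist a b + listD l l' := add_le_add (hg a b) (ih l')
end

section
/- The free metric monoid functor is not enriched over Met: let Y = Bool with the extended metric edist b b' = 0 if b = b' and 1 otherwise, and let f₁, f₂ : PUnit → Bool be the constant maps with values true and false respectively. Then ⨆_{x : PUnit} edist (f₁ x) (f₂ x) = 1, but for the induced maps on lists one has ⨆_{l : List PUnit} D (l.map f₁) (l.map f₂) = ∞, where D is the addition metric on lists; indeed D (List.replicate n true) (List.replicate n false) = n for every n. -/
open scoped ENNReal

/-- `Bool` with the discrete `{0,1}`-valued extended metric. -/
noncomputable instance : EMetricSpace Bool where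
  edist b b' := if b = b' then 0 else 1
  edist_self b := by simp
  edist_comm a b := by cases a <;> cases b <;> simp
  edist_triangle a b c := by cases a <;> cases b <;> cases c <;> simp
  eq_of_edist_eq_zero := by intro a b h; cases a <;> cases b <;> simp_all


theorem listD_replicate {X : Type*} [EMetricSpace X] (n : ℕ) (a b : X) :
    listD (List.replicate n a) (List.replicate n b) = n * edist a b := by
  simp [listD]

theorem edist_true_false : edist true false = 1 := rfl

theorem listD_replicate_true_false (n : ℕ) :
    listD (List.replicate n true) (List.replicate n false) = n := by
  rw [listD_replicate, edist_true_false, mul_one]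

/-- The free metric monoid functor is not enriched over `Met`: the constant maps
`true, false : PUnit → Bool` have distance `1`, but the induced maps on lists with the
addition metric have distance `∞`. -/
theorem free_metric_monoid_not_enriched :
    ((⨆ x : PUnit, edist ((fun _ : PUnit => true) x) ((fun _ : PUnit => false) x)) = 1) ∧
    ((⨆ l : List PUnit,
        listD (l.map fun _ : PUnit => true) (l.map fun _ : PUnit => false)) = ∞) ∧
    ∀ n : ℕ, listD (List.replicate n true) (List.replicate n false) = n := by
  refine ⟨by rw [ciSup_const, edist_true_false], ?_, listD_replicate_true_false⟩
  refine eq_top_iff.2 (ENNReal.iSup_natCast ▸ iSup_mono' fun n => ⟨List.replicate n PUnit.unit, ?_⟩)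
  rw [List.map_replicate, List.map_replicate, listD_replicate_true_false]
end

section
/- Diagonal fill-in for the (surjective, isometric embedding) factorization system on quantitative L-algebras: let e : X → Y be a surjective nonexpanding homomorphism, let m : A → B be a nonexpanding homomorphism that is an isometric embedding (edist (m a) (m a') = edist a a' for all a, a'), and let u : X → A and v : Y → B be nonexpanding homomorphisms with m ∘ u = v ∘ e. Then there exists a unique nonexpanding homomorphism d : Y → A with d ∘ e = u and m ∘ d = v. -/
open FirstOrder FirstOrder.Language

/-- Diagonal fill-in for the (surjective, isometric embedding) factorization system on
quantitative `L`-algebras. -/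
theorem qalg_diagonal_fill_in (L : Language) (hL : ∀ n, IsEmpty (L.Relations n))
    {X Y A B : Type*} [EMetricSpace X] [L.Structure X] [EMetricSpace Y] [L.Structure Y]
    [EMetricSpace A] [L.Structure A] [EMetricSpace B] [L.Structure B]
    (hX : QuantAlg L X) (hY : QuantAlg L Y) (hA : QuantAlg L A) (hB : QuantAlg L B)
    (e : X → Y) (he : IsQHom L X Y e) (hesurj : Function.Surjective e)
    (m : A → B) (hm : IsQHom L A B m)
    (hiso : ∀ a a' : A, edist (m a) (m a') = edist a a')
    (u : X → A) (hu : IsQHom L X A u)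
    (v : Y → B) (hv : IsQHom L Y B v)
    (hcomm : m ∘ u = v ∘ e) :
    ∃! d : Y → A, IsQHom L Y A d ∧ d ∘ e = u ∧ m ∘ d = v := by

  have hminj : Function.Injective m := fun a a' h => by
    have := hiso a a'
    rw [h, edist_self] at this
    exact edist_eq_zero.mp this.symm
  have hmu : ∀ x, m (u x) = v (e x) := fun x => congrFun hcomm x
  have key : ∀ x x' : X, e x = e x' → u x = u x' := by
    intro x x' h
    apply hminj
    rw [hmu, hmu, h]
  choose g hg using hesurj
  set d : Y → A := fun y => u (g y) with hd
  have hde : ∀ x, d (e x) = u x := fun x => key _ _ (hg (e x))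
  have hmd : ∀ y, m (d y) = v y := fun y => by rw [hd]; simp [hmu, hg]
  refine ⟨d, ⟨⟨?_, ?_⟩, funext hde, funext hmd⟩, ?_⟩
  · intro y y'
    rw [← hiso, hmd, hmd]
    exact hv.1 y y'
  · intro n σ x
    obtain ⟨z, hz⟩ : ∃ z : Fin n → X, ∀ i, e (z i) = x i :=
      ⟨fun i => g (x i), fun i => hg (x i)⟩
    have hx : x = e ∘ z := funext fun i => (hz i).symm
    rw [hx, ← he.2, hde, hu.2]
    congr 1
    funext i
    simp [Function.comp, hde]
  · rintro d' ⟨_, hd'e, _⟩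
    funext y
    rw [← hg y, hde]
    exact congrFun hd'e (g y)
end
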